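/- Let GR be any set of timed traces over A = I ⊎ O. The family F of all extension-closed supersets TT of GR with respect to which no timed trace is auto-⊤ or semi-⊤ contains the set of all timed traces and is closed under arbitrary nonempty intersections. Consequently, the intersection of all members of F itself belongs to F, i.e. there exists a least extension-closed superset GR^R of GR with respect to which no timed trace is auto-⊤ or semi-⊤ (the realisation, or ⊤-backpropagation, of GR is well defined). -/

import Mathlib

open Classical

/-- A timed event: either an action or a (delay given by a) real number. -/
abbrev TEvent (α : Type*) := α ⊕ ℝ

/-- `tt` is a timed trace over alphabet `A`: every element is an action in `A`
or a positive real delay, and no two reals are adjacent. -/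
def IsTrace {α : Type*} (A : Set α) (tt : List (TEvent α)) : Prop :=
  (∀ x ∈ tt, Sum.elim (· ∈ A) (fun d => 0 < d) x) ∧
  tt.Chain' (fun x y => x.isLeft = true ∨ y.isLeft = true)

/-- Concatenation of timed traces, coalescing adjacent reals by summing them. -/
def tcat {α : Type*} : List (TEvent α) → List (TEvent α) → List (TEvent α)
  | [], ys => ys
  | [Sum.inr d], Sum.inr d' :: ys => Sum.inr (d + d') :: ys
  | x :: xs, ys => x :: tcat xs ys

/-- Duration of a timed trace: the sum of all its reals. -/
def dur {α : Type*} (tt : List (TEvent α)) : ℝ :=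
  (tt.map (Sum.elim (fun _ => (0 : ℝ)) id)).sum

/-- Action count of a timed trace. -/
def acount {α : Type*} (tt : List (TEvent α)) : ℕ :=
  (tt.filter Sum.isLeft).length

/-- Projection of a timed trace onto a sub-alphabet `A₀`: remove actions not in
`A₀` and coalesce reals that thereby become adjacent. -/
noncomputable def proj {α : Type*} (A₀ : Set α) : List (TEvent α) → List (TEvent α)
  | [] => []
  | Sum.inl a :: xs => if a ∈ A₀ then Sum.inl a :: proj A₀ xs else proj A₀ xs
  | Sum.inr d :: xs => tcat [Sum.inr d] (proj A₀ xs)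

/-- `tt⌢⟨d⟩` for `d ≥ 0`, where `tt⌢⟨0⟩` denotes `tt` itself. -/
noncomputable def dext {α : Type*} (tt : List (TEvent α)) (d : ℝ) : List (TEvent α) :=
  if d = 0 then tt else tcat tt [Sum.inr d]

/-- `TT` is extension-closed (over alphabet `A`). -/
def ExtClosed {α : Type*} (A : Set α) (TT : Set (List (TEvent α))) : Prop :=
  ∀ tt ∈ TT, (∀ a ∈ A, tcat tt [Sum.inl a] ∈ TT) ∧
    (∀ d : ℝ, 0 < d → tcat tt [Sum.inr d] ∈ TT)

/-- `tt` is auto-⊥ (resp. auto-⊤) w.r.t. `TT` when `X` is the output (resp.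
input) alphabet: `tt ∉ TT` but some one-action `X`-extension of `tt` is in `TT`. -/
def AutoErr {α : Type*} (X : Set α) (TT : Set (List (TEvent α)))
    (tt : List (TEvent α)) : Prop :=
  tt ∉ TT ∧ ∃ e ∈ X, tcat tt [Sum.inl e] ∈ TT

/-- `tt` is semi-⊥ (resp. semi-⊤) w.r.t. `TT` when `Y` is the input (resp.
output) alphabet. -/
def SemiErr {α : Type*} (Y : Set α) (TT : Set (List (TEvent α)))
    (tt : List (TEvent α)) : Prop :=
  tt ∉ TT ∧ ∃ d : ℝ, 0 < d ∧ dext tt d ∈ TT ∧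
    ∀ d₀ : ℝ, 0 ≤ d₀ → d₀ < d → ∀ e ∈ Y, tcat (dext tt d₀) [Sum.inl e] ∈ TT

/-- The family of extension-closed supersets of `S` (consisting of timed traces
over `A`) with respect to which no timed trace is `AutoErr X` or `SemiErr Y`. -/
def ErrFreeFamily {α : Type*} (A X Y : Set α) (S : Set (List (TEvent α))) :
    Set (Set (List (TEvent α))) :=
  {TT | S ⊆ TT ∧ TT ⊆ {tt | IsTrace A tt} ∧ ExtClosed A TT ∧
    ∀ tt, IsTrace A tt → ¬ AutoErr X TT tt ∧ ¬ SemiErr Y TT tt}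

/-- The least extension-closed superset of `S` with respect to which no timed
trace is `AutoErr X` or `SemiErr Y`.  With `X := O`, `Y := I` this is the
normalisation (⊥-backpropagation) `S^N`; with `X := I`, `Y := O` it is the
realisation (⊤-backpropagation) `S^R`. -/
def backprop {α : Type*} (A X Y : Set α) (S : Set (List (TEvent α))) :
    Set (List (TEvent α)) :=
  ⋂₀ ErrFreeFamily A X Y S

/-- `TT` is `X`-receptive (I-receptive for `X := I`, O-receptive for `X := O`). -/
def Receptive {α : Type*} (X : Set α) (TT : Set (List (TEvent α))) : Prop :=
  ∀ tt ∈ TT,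
    (∀ e ∈ X, tcat tt [Sum.inl e] ∈ TT) ∧
    (∀ d : ℝ, 0 < d → tcat tt [Sum.inr d] ∉ TT →
      ∃ w, w ≠ [] ∧ IsTrace X w ∧ (∃ a, w.getLast? = some (Sum.inl a)) ∧
        tcat tt w ∈ TT ∧ dur w < d)

/-!
The conditions defining the family are preserved by intersections: an auto- or semi-error
of a trace `tt` with respect to `⋂₀ G` is already an error with respect to any member of
`G` that misses `tt`, since that member contains all the extensions of `tt` witnessing
the error. The set of all timed traces has no erroneous trace at all, since it contains
every trace, so the family is nonempty and its intersection is its least element.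
-/

section

variable {α : Type*}

theorem head?_map_isLeft_tcat (xs ys : List (TEvent α)) :
    (tcat xs ys).head?.map Sum.isLeft = (xs ++ ys).head?.map Sum.isLeft := by
  fun_cases tcat xs ys <;> rfl

theorem IsTrace.tcat {A : Set α} {xs ys : List (TEvent α)} (hxs : IsTrace A xs)
    (hys : IsTrace A ys) : IsTrace A (tcat xs ys) := by
  fun_induction _root_.tcat xs ys with
  | case1 ys => exact hys
  | case2 d d' ys =>
    obtain ⟨hd, -⟩ := List.forall_mem_cons.1 hxs.1
    obtain ⟨hd', hys_valid⟩ := List.forall_mem_cons.1 hys.1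
    obtain ⟨hd'_next, hys_chain⟩ := List.isChain_cons.1 hys.2
    exact ⟨List.forall_mem_cons.2 ⟨add_pos hd hd', hys_valid⟩,
      List.isChain_cons.2 ⟨hd'_next, hys_chain⟩⟩
  | case3 x xs ys not_case2 ih =>
    obtain ⟨hx, hxs_valid⟩ := List.forall_mem_cons.1 hxs.1
    obtain ⟨hx_next, hxs_chain⟩ := List.isChain_cons.1 hxs.2
    obtain ⟨ih_valid, ih_chain⟩ := ih ⟨hxs_valid, hxs_chain⟩ hys
    refine ⟨List.forall_mem_cons.2 ⟨hx, ih_valid⟩, List.isChain_cons.2 ⟨fun y hy => ?_, ih_chain⟩⟩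
    cases xs with
    | nil =>
      obtain ⟨ys', rfl⟩ := List.head?_eq_some_iff.1 hy
      rcases x with a | d
      · exact Or.inl rfl
      rcases y with a' | d'
      · exact Or.inr rfl
      exact (not_case2 d d' ys' rfl rfl rfl).elim
    | cons z zs =>
      have hyz : y.isLeft = z.isLeft := by
        simpa [Option.mem_def.1 hy] using head?_map_isLeft_tcat (z :: zs) ys
      exact hyz ▸ hx_next z rfl

theorem extClosed_setOf_isTrace (A : Set α) : ExtClosed A {tt | IsTrace A tt} :=
  fun _ htt => ⟨fun _ ha => htt.tcat ⟨by simpa using ha, List.isChain_singleton _⟩,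
    fun _ hd => htt.tcat ⟨by simpa using hd, List.isChain_singleton _⟩⟩

theorem ExtClosed.sInter {A : Set α} {G : Set (Set (List (TEvent α)))}
    (hG : ∀ TT ∈ G, ExtClosed A TT) : ExtClosed A (⋂₀ G) := fun _ htt =>
  ⟨fun a ha => Set.mem_sInter.2 fun TT hTT => ((hG TT hTT) _ (htt TT hTT)).1 a ha,
    fun d hd => Set.mem_sInter.2 fun TT hTT => ((hG TT hTT) _ (htt TT hTT)).2 d hd⟩

theorem AutoErr.of_subset {X : Set α} {S TT : Set (List (TEvent α))} {tt : List (TEvent α)}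
    (h : AutoErr X S tt) (hST : S ⊆ TT) (htt : tt ∉ TT) : AutoErr X TT tt :=
  let ⟨_, e, he, hext⟩ := h
  ⟨htt, e, he, hST hext⟩

theorem SemiErr.of_subset {Y : Set α} {S TT : Set (List (TEvent α))} {tt : List (TEvent α)}
    (h : SemiErr Y S tt) (hST : S ⊆ TT) (htt : tt ∉ TT) : SemiErr Y TT tt :=
  let ⟨_, d, hd, hdext, hext⟩ := h
  ⟨htt, d, hd, hST hdext, fun d₀ hd₀ hd₀d e he => hST (hext d₀ hd₀ hd₀d e he)⟩

theorem setOf_isTrace_mem_errFreeFamily {A X Y : Set α} {S : Set (List (TEvent α))}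
    (hS : S ⊆ {tt | IsTrace A tt}) : {tt | IsTrace A tt} ∈ ErrFreeFamily A X Y S :=
  ⟨hS, subset_rfl, extClosed_setOf_isTrace A, fun _ htt => ⟨fun h => h.1 htt, fun h => h.1 htt⟩⟩

theorem sInter_mem_errFreeFamily {A X Y : Set α} {S : Set (List (TEvent α))}
    {G : Set (Set (List (TEvent α)))} (hG : G ⊆ ErrFreeFamily A X Y S) (hne : G.Nonempty) :
    ⋂₀ G ∈ ErrFreeFamily A X Y S := by
  obtain ⟨TT₀, hTT₀⟩ := hne
  refine ⟨Set.subset_sInter fun TT hTT => (hG hTT).1,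
    (Set.sInter_subset_of_mem hTT₀).trans (hG hTT₀).2.1,
    ExtClosed.sInter fun TT hTT => (hG hTT).2.2.1, fun tt htt => ?_⟩
  have missed_by_member (htt_notMem : tt ∉ ⋂₀ G) : ∃ TT ∈ G, tt ∉ TT := by
    simpa [Set.mem_sInter] using htt_notMem
  refine ⟨fun h => ?_, fun h => ?_⟩
  · obtain ⟨TT, hTT, htt_TT⟩ := missed_by_member h.1
    exact ((hG hTT).2.2.2 tt htt).1 (h.of_subset (Set.sInter_subset_of_mem hTT) htt_TT)
  · obtain ⟨TT, hTT, htt_TT⟩ := missed_by_member h.1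
    exact ((hG hTT).2.2.2 tt htt).2 (h.of_subset (Set.sInter_subset_of_mem hTT) htt_TT)

theorem backprop_mem_errFreeFamily {A X Y : Set α} {S : Set (List (TEvent α))}
    (hS : S ⊆ {tt | IsTrace A tt}) : backprop A X Y S ∈ ErrFreeFamily A X Y S :=
  sInter_mem_errFreeFamily subset_rfl ⟨_, setOf_isTrace_mem_errFreeFamily hS⟩

end

theorem realisation_well_defined_general {α : Type*} (I O : Set α)
    (GR : Set (List (TEvent α)))
    (hGR : GR ⊆ {tt | IsTrace (I ∪ O) tt}) :
    {tt | IsTrace (I ∪ O) tt} ∈ ErrFreeFamily (I ∪ O) I O GR ∧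
    (∀ G ⊆ ErrFreeFamily (I ∪ O) I O GR, G.Nonempty →
      ⋂₀ G ∈ ErrFreeFamily (I ∪ O) I O GR) ∧
    backprop (I ∪ O) I O GR ∈ ErrFreeFamily (I ∪ O) I O GR :=
  ⟨setOf_isTrace_mem_errFreeFamily hGR, fun _ hG hne => sInter_mem_errFreeFamily hG hne,
    backprop_mem_errFreeFamily hGR⟩

/-- The family of extension-closed supersets of `GR` free of auto-⊤ and semi-⊤
traces contains the set of all timed traces, is closed under nonempty
intersections, and hence has a least element `GR^R` (realisation is well
defined). -/
theorem realisation_well_defined {α : Type*} (I O : Set α)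
    (hIO : Disjoint I O) (GR : Set (List (TEvent α)))
    (hGR : GR ⊆ {tt | IsTrace (I ∪ O) tt}) :
    {tt | IsTrace (I ∪ O) tt} ∈ ErrFreeFamily (I ∪ O) I O GR ∧
    (∀ G ⊆ ErrFreeFamily (I ∪ O) I O GR, G.Nonempty →
      ⋂₀ G ∈ ErrFreeFamily (I ∪ O) I O GR) ∧
    backprop (I ∪ O) I O GR ∈ ErrFreeFamily (I ∪ O) I O GR :=
  realisation_well_defined_general I O GR hGR
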